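/- arXiv:2605.12881 — 2 statements merged into one kernel-verified Lean document; each statement's English description precedes it below -/
import Mathlib

section
/- Let (Θ̂₁,…,Θ̂_T) be any tuple of p×p real matrices, and suppose there exist real numbers Ê_{uv,1t} (1 ≤ u ≠ v ≤ p, 1 ≤ t ≤ T) and p×p real matrices Ê_{2t} (1 ≤ t ≤ T) satisfying: Ê_{uv,1t} = sgn(Θ̂_{uv,t}) whenever Θ̂_{uv,t} ≠ 0 and Ê_{uv,1t} ∈ [−1,1] otherwise; Ê_{21} = 0; for 2 ≤ t ≤ T, Ê_{2t} = (Θ̂_t − Θ̂_{t−1})/‖Θ̂_t − Θ̂_{t−1}‖_F if Θ̂_t ≠ Θ̂_{t−1} and ‖Ê_{2t}‖_F ≤ 1 if Θ̂_t = Θ̂_{t−1}; and for every 1 ≤ t ≤ T, (1/T)·∑_{r=t}^{T} (Θ̂_r − X_r X_rᵀ) + λ₁·M_t + λ₂·ξ_{2t}·Ê_{2t} = 0, where M_t is the p×p matrix with (u,v) entry ∑_{r=t}^{T} ξ_{uv,1r}·Ê_{uv,1r} for u ≠ v and 0 on the diagonal. Then G_a(Θ̂₁,…,Θ̂_T) ≤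 G_a(Θ₁,…,Θ_T) for every tuple (Θ₁,…,Θ_T) of p×p real matrices; that is, (Θ̂_t) is a global minimizer of G_a. -/
open Matrix Finset

/-- Frobenius norm of a real `p × p` matrix. -/
noncomputable def frob {p : ℕ} (A : Matrix (Fin p) (Fin p) ℝ) : ℝ :=
  Real.sqrt (∑ u, ∑ v, (A u v) ^ 2)

/-- The adaptive GFlsL objective, with time indices `t = 1, …, T`, entrywise LASSO
weights `ξ1 u v t` (for `u ≠ v`) and fused weights `ξ2 t`. -/
noncomputable def gflslA (p T : ℕ) (X : ℕ → Fin p → ℝ) (lam1 lam2 : ℝ)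
    (ξ1 : Fin p → Fin p → ℕ → ℝ) (ξ2 : ℕ → ℝ)
    (Θ : ℕ → Matrix (Fin p) (Fin p) ℝ) : ℝ :=
  (1 / (2 * (T : ℝ))) *
      ∑ t ∈ Finset.Icc 1 T,
        ((Θ t)ᵀ * Θ t - (Matrix.vecMulVec (X t) (X t))ᵀ * Θ t
          - (Θ t)ᵀ * Matrix.vecMulVec (X t) (X t)).trace
    + lam1 * ∑ t ∈ Finset.Icc 1 T, ∑ u, ∑ v,
        (if u ≠ v then ξ1 u v t * |Θ t u v| else 0)
    + lam2 * ∑ t ∈ Finset.Icc 2 T, ξ2 t * frob (Θ t - Θ (t - 1))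

/-!
Each summand of the objective is convex, and the hypotheses provide a subgradient of each one
at `Θhat`: `(1/T)(Θhat_t - X_t X_tᵀ)` for the loss, the off-diagonal matrix of `ξ_{uv,1t} E_{uv,1t}`
for the LASSO term and `E_{2t}` for each fused term. Summing the subgradient inequalities bounds
`G_a(Θ) - G_a(Θhat)` below by a linear expression in `Δ_t = Θ_t - Θhat_t`. The stationarity
conditions say that the fused subgradient at time `t` is minus the tail sum over `r ≥ t` of the
other subgradients, so summation by parts turns this expression into boundary terms, which vanish
because `ξ_{21} = 0` and the tail sum past `T` is empty.
-/

section Subgradient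

variable {E : Type*} [AddCommGroup E] [Module ℝ E]

def HasSubgradientAt (B : LinearMap.BilinForm ℝ E) (f : E → ℝ) (g x : E) : Prop :=
  ∀ y, f x + B g (y - x) ≤ f y

namespace HasSubgradientAt

variable {B : LinearMap.BilinForm ℝ E} {f f' : E → ℝ} {g g' x : E}

theorem add (hf : HasSubgradientAt B f g x) (hf' : HasSubgradientAt B f' g' x) :
    HasSubgradientAt B (fun y => f y + f' y) (g + g') x := fun y => by
  rw [LinearMap.map_add₂]
  linarith [hf y, hf' y]

theorem const_mul (hf : HasSubgradientAt B f g x) {a : ℝ} (ha : 0 ≤ a) :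
    HasSubgradientAt B (fun y => a * f y) (a • g) x := fun y => by
  rw [LinearMap.map_smul₂, smul_eq_mul]
  nlinarith [hf y]

end HasSubgradientAt

def fusedObjective (T : ℕ) (f h : ℕ → E → ℝ) (x : ℕ → E) : ℝ :=
  ∑ t ∈ Icc 1 T, f t (x t) + ∑ t ∈ Icc 2 T, h t (x t - x (t - 1))

theorem sum_apply_add_sum_apply_sub_eq_zero (B : LinearMap.BilinForm ℝ E) {T : ℕ}
    {g c : ℕ → E} (hc₁ : c 1 = 0) (hstat : ∀ t ∈ Icc 1 T, ∑ r ∈ Icc t T, g r + c t = 0)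
    (δ : ℕ → E) :
    ∑ t ∈ Icc 1 T, B (g t) (δ t) + ∑ t ∈ Icc 2 T, B (c t) (δ t - δ (t - 1)) = 0 := by
  rcases Nat.eq_zero_or_pos T with rfl | hT
  · simp
  replace hT : 1 ≤ T := hT
  set K : ℕ → E := fun t => ∑ r ∈ Icc t T, g r
  have hg : ∀ t ≤ T, g t = K t - K (t + 1) := fun t ht => by
    simp only [K, ← add_sum_Ioc_eq_sum_Icc ht, Icc_add_one_left_eq_Ioc, add_sub_cancel_right]
  have hc : ∀ t ∈ Icc 1 T, c t = -K t := fun t ht => eq_neg_of_add_eq_zero_right (hstat t ht)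
  have hK₁ : K 1 = 0 := by rw [← neg_eq_zero, ← hc 1 (mem_Icc.mpr ⟨le_rfl, hT⟩), hc₁]
  have hK_succ : K (T + 1) = 0 := by simp [K]
  have hc_sum : ∑ t ∈ Icc 2 T, B (c t) (δ t - δ (t - 1))
      = ∑ t ∈ Icc 1 T, B (c t) (δ t - δ (t - 1)) := by
    rw [← add_sum_Ioc_eq_sum_Icc (a := 1) hT, hc₁, map_zero, LinearMap.zero_apply, zero_add,
      ← Icc_add_one_left_eq_Ioc, one_add_one_eq_two]
  -- the summand at `t` is `ψ t - ψ (t + 1)` with `ψ t = B (K t) (δ (t - 1))`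
  calc _ = ∑ t ∈ Icc 1 T, -(B (K (t + 1)) (δ (t + 1 - 1)) - B (K t) (δ (t - 1))) := by
        rw [hc_sum, ← sum_add_distrib]
        refine sum_congr rfl fun t ht => ?_
        rw [hg t (mem_Icc.mp ht).2, hc t ht, Nat.add_sub_cancel]
        simp only [map_sub, map_neg, LinearMap.sub_apply, LinearMap.neg_apply]
        ring
    _ = 0 := by
        rw [sum_neg_distrib, sum_Icc_sub hT (fun t => B (K t) (δ (t - 1))), hK₁, hK_succ]
        simp

theorem fusedObjective_le_of_hasSubgradientAt (B : LinearMap.BilinForm ℝ E) {T : ℕ}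
    {f h : ℕ → E → ℝ} {xhat : ℕ → E} {g c : ℕ → E}
    (hf : ∀ t ∈ Icc 1 T, HasSubgradientAt B (f t) (g t) (xhat t))
    (hh : ∀ t ∈ Icc 2 T, HasSubgradientAt B (h t) (c t) (xhat t - xhat (t - 1)))
    (hc₁ : c 1 = 0) (hstat : ∀ t ∈ Icc 1 T, ∑ r ∈ Icc t T, g r + c t = 0) (x : ℕ → E) :
    fusedObjective T f h xhat ≤ fusedObjective T f h x := by
  have hsum := sum_apply_add_sum_apply_sub_eq_zero B hc₁ hstat (fun t => x t - xhat t)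
  have hf_sum := sum_le_sum fun t ht => hf t ht (x t)
  have hh_sum := sum_le_sum fun t ht => hh t ht (x t - x (t - 1))
  simp only [sum_add_distrib] at hf_sum hh_sum
  have hdiff : ∀ t, x t - x (t - 1) - (xhat t - xhat (t - 1))
      = (x t - xhat t) - (x (t - 1) - xhat (t - 1)) := fun t => by abel
  simp only [hdiff] at hh_sum
  unfold fusedObjective
  linarith

end Subgradient

theorem abs_add_mul_sub_le_abs {z e : ℝ} (h₁ : z ≠ 0 → e = Real.sign z)
    (h₂ : z = 0 → -1 ≤ e ∧ e ≤ 1) (x : ℝ) : |z| + e * (x - z) ≤ |x| := by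
  have he : |e| ≤ 1 := by
    by_cases hz : z = 0
    · exact abs_le.mpr (h₂ hz)
    · rcases Real.sign_apply_eq_of_ne_zero z hz with h | h <;> simp [h₁ hz, h]
  have hez : e * z = |z| := by
    rcases lt_trichotomy z 0 with hz | rfl | hz
    · rw [h₁ hz.ne, Real.sign_of_neg hz, abs_of_neg hz]; ring
    · simp
    · rw [h₁ hz.ne', Real.sign_of_pos hz, abs_of_pos hz]; ring
  calc |z| + e * (x - z) = e * x := by rw [← hez]; ring
    _ ≤ |e| * |x| := by rw [← abs_mul]; exact le_abs_self _
    _ ≤ |x| := mul_le_of_le_one_left (abs_nonneg x) he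

theorem norm_add_inner_sub_le_norm {F : Type*} [NormedAddCommGroup F] [InnerProductSpace ℝ F]
    {x e : F} (h₁ : x ≠ 0 → e = ‖x‖⁻¹ • x) (h₂ : x = 0 → ‖e‖ ≤ 1) (y : F) :
    ‖x‖ + inner ℝ e (y - x) ≤ ‖y‖ := by
  have he : ‖e‖ ≤ 1 := by
    by_cases hx : x = 0
    · exact h₂ hx
    · rw [h₁ hx]; exact (norm_smul_inv_norm hx).le
  have hex : inner ℝ e x = ‖x‖ := by
    by_cases hx : x = 0
    · simp [hx]
    · rw [h₁ hx, real_inner_smul_left, real_inner_self_eq_norm_sq]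
      field_simp [norm_ne_zero_iff.mpr hx]
  calc ‖x‖ + inner ℝ e (y - x) = inner ℝ e y := by rw [inner_sub_right, hex]; ring
    _ ≤ ‖e‖ * ‖y‖ := real_inner_le_norm e y
    _ ≤ ‖y‖ := mul_le_of_le_one_left (norm_nonneg y) he

section OffDiag

variable {n : Type*} [DecidableEq n]

def offDiagOf (f : n → n → ℝ) : Matrix n n ℝ := of fun u v => if u = v then 0 else f u v

theorem offDiagOf_sum {ι : Type*} (s : Finset ι) (f : ι → n → n → ℝ) :
    offDiagOf (fun u v => ∑ r ∈ s, f r u v) = ∑ r ∈ s, offDiagOf (f r) := by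
  ext u v
  simp only [offDiagOf, of_apply, Matrix.sum_apply]
  split_ifs <;> simp

end OffDiag

section Frobenius

variable {m n : Type*} [Fintype m] [Fintype n]

def frobeniusForm : LinearMap.BilinForm ℝ (Matrix m n ℝ) :=
  LinearMap.mk₂ ℝ (fun A B => (Aᵀ * B).trace)
    (fun A A' B => by simp [Matrix.add_mul]) (fun a A B => by simp)
    (fun A B B' => by simp [Matrix.mul_add]) (fun a A B => by simp)

theorem frobeniusForm_apply (A B : Matrix m n ℝ) : frobeniusForm A B = (Aᵀ * B).trace := rfl

theorem frobeniusForm_eq_sum (A B : Matrix m n ℝ) :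
    frobeniusForm A B = ∑ i, ∑ j, A i j * B i j := by
  simp only [frobeniusForm_apply, trace, diag_apply, mul_apply, transpose_apply]
  exact sum_comm

theorem frobeniusForm_eq_inner (A B : Matrix m n ℝ) :
    frobeniusForm A B = inner ℝ (WithLp.toLp 2 A.vec) (WithLp.toLp 2 B.vec) := by
  rw [EuclideanSpace.inner_toLp_toLp, star_trivial, dotProduct_comm, vec_dotProduct_vec,
    frobeniusForm_apply]

def quadraticLoss (S A : Matrix m n ℝ) : ℝ := (Aᵀ * A - Sᵀ * A - Aᵀ * S).trace

theorem quadraticLoss_hasSubgradientAt (S X : Matrix m n ℝ) :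
    HasSubgradientAt frobeniusForm (quadraticLoss S) ((2 : ℝ) • (X - S)) X := fun Y => by
  have hsq := real_inner_self_nonneg (x := WithLp.toLp 2 (Y - X).vec)
  simp only [quadraticLoss, trace_sub, ← frobeniusForm_apply, LinearMap.map_smul₂, smul_eq_mul,
    frobeniusForm_eq_inner, vec_sub, WithLp.toLp_sub, inner_sub_left, inner_sub_right] at hsq ⊢
  linarith [real_inner_comm (WithLp.toLp 2 S.vec) (WithLp.toLp 2 X.vec),
    real_inner_comm (WithLp.toLp 2 S.vec) (WithLp.toLp 2 Y.vec),
    real_inner_comm (WithLp.toLp 2 X.vec) (WithLp.toLp 2 Y.vec)]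

variable [DecidableEq n]

def weightedOffDiagL1 (w : n → n → ℝ) (A : Matrix n n ℝ) : ℝ :=
  ∑ u, ∑ v, if u ≠ v then w u v * |A u v| else 0

theorem weightedOffDiagL1_hasSubgradientAt {w e : n → n → ℝ} {X : Matrix n n ℝ}
    (hw : ∀ u v, u ≠ v → 0 ≤ w u v)
    (he : ∀ u v, u ≠ v → (X u v ≠ 0 → e u v = Real.sign (X u v)) ∧
      (X u v = 0 → -1 ≤ e u v ∧ e u v ≤ 1)) :
    HasSubgradientAt frobeniusForm (weightedOffDiagL1 w) (offDiagOf fun u v => w u v * e u v)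
      X := fun Y => by
  simp only [weightedOffDiagL1, frobeniusForm_eq_sum, ← sum_add_distrib]
  refine sum_le_sum fun u _ => sum_le_sum fun v _ => ?_
  by_cases huv : u = v
  · simp [huv, offDiagOf]
  · have hentry := abs_add_mul_sub_le_abs (he u v huv).1 (he u v huv).2 (Y u v)
    simp only [offDiagOf, of_apply, Matrix.sub_apply, ne_eq, huv, not_false_eq_true, if_true,
      if_false]
    nlinarith [mul_le_mul_of_nonneg_left hentry (hw u v huv)]

end Frobenius

theorem frob_eq_norm_vec {p : ℕ} (A : Matrix (Fin p) (Fin p) ℝ) :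
    frob A = ‖WithLp.toLp 2 A.vec‖ := by
  rw [frob, EuclideanSpace.norm_eq, Fintype.sum_prod_type, sum_comm]
  simp [vec]

theorem frob_hasSubgradientAt {p : ℕ} {Z E : Matrix (Fin p) (Fin p) ℝ}
    (h₁ : Z ≠ 0 → E = (frob Z)⁻¹ • Z) (h₂ : Z = 0 → frob E ≤ 1) :
    HasSubgradientAt frobeniusForm frob E Z := fun Y => by
  simp only [frob_eq_norm_vec, frobeniusForm_eq_inner, vec_sub, WithLp.toLp_sub] at h₁ h₂ ⊢
  refine norm_add_inner_sub_le_norm (fun hZ => ?_) (fun hZ => h₂ ?_) _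
  · rw [h₁ (by simpa [vec_eq_zero_iff] using hZ), vec_smul, WithLp.toLp_smul]
  · simpa [vec_eq_zero_iff] using hZ

theorem gflslA_eq_fusedObjective (p T : ℕ) (X : ℕ → Fin p → ℝ) (lam1 lam2 : ℝ)
    (ξ1 : Fin p → Fin p → ℕ → ℝ) (ξ2 : ℕ → ℝ) (Θ : ℕ → Matrix (Fin p) (Fin p) ℝ) :
    gflslA p T X lam1 lam2 ξ1 ξ2 Θ = fusedObjective T
      (fun t A => 1 / (2 * (T : ℝ)) * quadraticLoss (vecMulVec (X t) (X t)) A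
        + lam1 * weightedOffDiagL1 (fun u v => ξ1 u v t) A)
      (fun t D => lam2 * (ξ2 t * frob D)) Θ := by
  simp only [gflslA, fusedObjective, quadraticLoss, weightedOffDiagL1, sum_add_distrib, mul_sum]

theorem stmt6_general (p T : ℕ)
    (X : ℕ → Fin p → ℝ) (lam1 lam2 : ℝ) (hlam1 : 0 ≤ lam1) (hlam2 : 0 < lam2)
    (ξ1 : Fin p → Fin p → ℕ → ℝ)
    (hξ1 : ∀ u v : Fin p, u ≠ v → ∀ t ∈ Finset.Icc 1 T, 0 ≤ ξ1 u v t)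
    (ξ2 : ℕ → ℝ) (hξ2 : ∀ t ∈ Finset.Icc 2 T, 0 ≤ ξ2 t) (hξ21 : ξ2 1 = 0)
    (Θhat : ℕ → Matrix (Fin p) (Fin p) ℝ)
    (E1 : Fin p → Fin p → ℕ → ℝ) (E2 : ℕ → Matrix (Fin p) (Fin p) ℝ)
    (hE1 : ∀ t ∈ Finset.Icc 1 T, ∀ u v : Fin p, u ≠ v →
      (Θhat t u v ≠ 0 → E1 u v t = Real.sign (Θhat t u v)) ∧
      (Θhat t u v = 0 → -1 ≤ E1 u v t ∧ E1 u v t ≤ 1))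
    (hE2 : ∀ t ∈ Finset.Icc 2 T,
      (Θhat t ≠ Θhat (t - 1) →
        E2 t = (frob (Θhat t - Θhat (t - 1)))⁻¹ • (Θhat t - Θhat (t - 1))) ∧
      (Θhat t = Θhat (t - 1) → frob (E2 t) ≤ 1))
    (hstat : ∀ t ∈ Finset.Icc 1 T,
      (1 / (T : ℝ)) • (∑ r ∈ Finset.Icc t T,
          (Θhat r - Matrix.vecMulVec (X r) (X r)))
      + lam1 • (Matrix.of fun u v =>
          if u = v then (0 : ℝ) else ∑ r ∈ Finset.Icc t T, ξ1 u v r * E1 u v r)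
      + (lam2 * ξ2 t) • E2 t = 0) :
    ∀ Θ : ℕ → Matrix (Fin p) (Fin p) ℝ,
      gflslA p T X lam1 lam2 ξ1 ξ2 Θhat ≤ gflslA p T X lam1 lam2 ξ1 ξ2 Θ := by
  intro Θ
  have hloss : ∀ t ∈ Icc 1 T, HasSubgradientAt frobeniusForm
      (fun A => 1 / (2 * (T : ℝ)) * quadraticLoss (vecMulVec (X t) (X t)) A
        + lam1 * weightedOffDiagL1 (fun u v => ξ1 u v t) A)
      ((1 / (T : ℝ)) • (Θhat t - vecMulVec (X t) (X t))
        + lam1 • offDiagOf fun u v => ξ1 u v t * E1 u v t) (Θhat t) := fun t ht => by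
    have hq := (quadraticLoss_hasSubgradientAt (vecMulVec (X t) (X t)) (Θhat t)).const_mul
      (a := 1 / (2 * (T : ℝ))) (by positivity)
    have hl := (weightedOffDiagL1_hasSubgradientAt (fun u v huv => hξ1 u v huv t ht)
      (hE1 t ht)).const_mul hlam1
    convert hq.add hl using 2
    rw [smul_smul]
    congr 1
    ring
  have hfused : ∀ t ∈ Icc 2 T, HasSubgradientAt frobeniusForm (fun D => lam2 * (ξ2 t * frob D))
      ((lam2 * ξ2 t) • E2 t) (Θhat t - Θhat (t - 1)) := fun t ht => by
    have hE := frob_hasSubgradientAt (fun h => (hE2 t ht).1 (sub_ne_zero.mp h))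
      (fun h => (hE2 t ht).2 (sub_eq_zero.mp h))
    simpa only [mul_assoc] using hE.const_mul (mul_nonneg hlam2.le (hξ2 t ht))
  rw [gflslA_eq_fusedObjective, gflslA_eq_fusedObjective]
  refine fusedObjective_le_of_hasSubgradientAt frobeniusForm hloss hfused (by simp [hξ21])
    (fun t ht => ?_) Θ
  rw [← hstat t ht, sum_add_distrib, ← smul_sum, ← smul_sum, ← offDiagOf_sum]
  rfl

/-- if a tuple satisfies the adaptive subgradient (KKT) conditions, then it
is a global minimizer of the adaptive GFlsL objective over all tuples of matrices. -/
theorem stmt6 (p T : ℕ) (hp : 1 ≤ p) (hT : 1 ≤ T)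
    (X : ℕ → Fin p → ℝ) (lam1 lam2 : ℝ) (hlam1 : 0 ≤ lam1) (hlam2 : 0 < lam2)
    (ξ1 : Fin p → Fin p → ℕ → ℝ)
    (hξ1 : ∀ u v : Fin p, u ≠ v → ∀ t ∈ Finset.Icc 1 T, 0 ≤ ξ1 u v t)
    (ξ2 : ℕ → ℝ) (hξ2 : ∀ t ∈ Finset.Icc 2 T, 0 ≤ ξ2 t) (hξ21 : ξ2 1 = 0)
    (Θhat : ℕ → Matrix (Fin p) (Fin p) ℝ)
    (E1 : Fin p → Fin p → ℕ → ℝ) (E2 : ℕ → Matrix (Fin p) (Fin p) ℝ)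
    (hE1 : ∀ t ∈ Finset.Icc 1 T, ∀ u v : Fin p, u ≠ v →
      (Θhat t u v ≠ 0 → E1 u v t = Real.sign (Θhat t u v)) ∧
      (Θhat t u v = 0 → -1 ≤ E1 u v t ∧ E1 u v t ≤ 1))
    (hE21 : E2 1 = 0)
    (hE2 : ∀ t ∈ Finset.Icc 2 T,
      (Θhat t ≠ Θhat (t - 1) →
        E2 t = (frob (Θhat t - Θhat (t - 1)))⁻¹ • (Θhat t - Θhat (t - 1))) ∧
      (Θhat t = Θhat (t - 1) → frob (E2 t) ≤ 1))
    (hstat : ∀ t ∈ Finset.Icc 1 T,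
      (1 / (T : ℝ)) • (∑ r ∈ Finset.Icc t T,
          (Θhat r - Matrix.vecMulVec (X r) (X r)))
      + lam1 • (Matrix.of fun u v =>
          if u = v then (0 : ℝ) else ∑ r ∈ Finset.Icc t T, ξ1 u v r * E1 u v r)
      + (lam2 * ξ2 t) • E2 t = 0) :
    ∀ Θ : ℕ → Matrix (Fin p) (Fin p) ℝ,
      gflslA p T X lam1 lam2 ξ1 ξ2 Θhat ≤ gflslA p T X lam1 lam2 ξ1 ξ2 Θ :=
  stmt6_general p T X lam1 lam2 hlam1 hlam2 ξ1 hξ1 ξ2 hξ2 hξ21 Θhat E1 E2 hE1 hE2 hstat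
end

section
/- Suppose (Θ̂₁,…,Θ̂_T) is a tuple of positive definite p×p real matrices that minimizes the adaptive GFlsL objective G_a over all tuples of positive definite p×p real matrices. With the additional convention ξ_{2,T+1} := 0, for all integers s, t with 1 ≤ s < t ≤ T+1 one has ‖(1/T)·∑_{r=s}^{t−1} (Θ̂_r − X_r X_rᵀ)‖_F ≤ λ₂·(ξ_{2s} + ξ_{2t}) + λ₁·√(p(p−1))·(t−s)·max_{s ≤ r ≤ t−1} max_{u≠v} ξ_{uv,1r}. -/
/-!
Perturb the minimiser on the block `s, …, t - 1` against the block residual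
`M = ∑_{r=s}^{t-1} (Θ̂_r - X_r X_rᵀ)`, i.e. replace `Θ̂_r` by `Θ̂_r - ε M` there. For small `ε > 0`
the perturbed matrices stay positive definite, so the objective cannot decrease. The quadratic loss
drops by `ε ‖M‖² / T` up to `O(ε²)`; the lasso penalty grows by at most
`ε λ₁ (t - s) max ξ₁ √(p (p - 1)) ‖M‖` (Cauchy–Schwarz over the off-diagonal entries), and the fused
penalty changes only at the two block boundaries, by at most `ε λ₂ (ξ_{2s} + ξ_{2t}) ‖M‖`. Dividing
by `ε` and letting `ε → 0⁺` gives `‖M‖² / T ≤ ‖M‖ · RHS`.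
-/

open Matrix Finset

open Filter Topology

attribute [local instance] Matrix.frobeniusNormedAddCommGroup Matrix.frobeniusNormedSpace

lemma Real.le_biSup_of_mem {ι : Type*} {S : Finset ι} (g : ι → ℝ) {r : ι} (hr : r ∈ S) :
    g r ≤ ⨆ i ∈ S, g i := by
  have hbdd : BddAbove (Set.range fun i => ⨆ _ : i ∈ S, g i) :=
    ⟨∑ i ∈ S, |g i|, Set.forall_mem_range.2 fun i =>
      Real.iSup_le
        (fun hi => (le_abs_self _).trans (single_le_sum (fun j _ => abs_nonneg (g j)) hi))
        (sum_nonneg fun j _ => abs_nonneg _)⟩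
  calc g r = ⨆ _ : r ∈ S, g r := (ciSup_pos (f := fun _ => g r) hr).symm
    _ ≤ ⨆ i ∈ S, g i := le_ciSup hbdd r

lemma le_biSup_offDiag {p : ℕ} {S : Finset ℕ} (ξ1 : Fin p → Fin p → ℕ → ℝ) {r : ℕ} (hr : r ∈ S)
    {u v : Fin p} (huv : u ≠ v) :
    ξ1 u v r ≤ ⨆ r ∈ S, ⨆ u : Fin p, ⨆ v : Fin p, ⨆ _ : u ≠ v, ξ1 u v r :=
  calc ξ1 u v r ≤ ⨆ u : Fin p, ⨆ v : Fin p, ⨆ _ : u ≠ v, ξ1 u v r :=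
        Finite.le_ciSup_of_le u <| Finite.le_ciSup_of_le v <|
          (ciSup_pos (f := fun _ => ξ1 u v r) huv).ge
    _ ≤ _ := Real.le_biSup_of_mem (fun r => ⨆ u : Fin p, ⨆ v : Fin p, ⨆ _ : u ≠ v, ξ1 u v r) hr

lemma biSup_offDiag_nonneg {p : ℕ} {S : Finset ℕ} {ξ1 : Fin p → Fin p → ℕ → ℝ}
    (h : ∀ r ∈ S, ∀ u v : Fin p, u ≠ v → 0 ≤ ξ1 u v r) :
    0 ≤ ⨆ r ∈ S, ⨆ u : Fin p, ⨆ v : Fin p, ⨆ _ : u ≠ v, ξ1 u v r :=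
  Real.iSup_nonneg fun r => Real.iSup_nonneg fun hr => Real.iSup_nonneg fun u =>
    Real.iSup_nonneg fun v => Real.iSup_nonneg fun huv => h r hr u v huv

lemma le_of_eventually_le_mul_add {a b c : ℝ} (h : ∀ᶠ ε in 𝓝[>] (0 : ℝ), a ≤ ε * c + b) :
    a ≤ b := by
  have hlim : Tendsto (fun ε => ε * c + b) (𝓝[>] (0 : ℝ)) (𝓝 b) :=
    tendsto_nhdsWithin_of_tendsto_nhds <|
      ((continuous_id.mul continuous_const).add continuous_const).tendsto' _ _ (by simp)
  exact ge_of_tendsto hlim h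

lemma one_div_mul_le_of_sq_div_le_mul {F B T : ℝ} (hF : 0 ≤ F) (hB : 0 ≤ B)
    (h : F ^ 2 / T ≤ F * B) : 1 / T * F ≤ B := by
  rcases hF.eq_or_lt with rfl | hF
  · simpa using hB
  · refine le_of_mul_le_mul_left ?_ hF
    calc F * (1 / T * F) = F ^ 2 / T := by ring
      _ ≤ F * B := h

section Frobenius

variable {m n : Type*} [Fintype m] [Fintype n]

lemma frobenius_norm_sq_eq_sum (A : Matrix m n ℝ) : ‖A‖ ^ 2 = ∑ i, ∑ j, A i j ^ 2 := by
  rw [frobenius_norm_def, ← Real.sqrt_eq_rpow, Real.sq_sqrt (by positivity)]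
  simp

lemma frob_eq_norm {p : ℕ} (A : Matrix (Fin p) (Fin p) ℝ) : frob A = ‖A‖ := by
  rw [frob, ← frobenius_norm_sq_eq_sum, Real.sqrt_sq (norm_nonneg A)]

lemma trace_transpose_mul_eq_sum (A B : Matrix m n ℝ) :
    (Aᵀ * B).trace = ∑ i, ∑ j, A i j * B i j := by
  simp only [Matrix.trace, Matrix.diag_apply, Matrix.mul_apply, Matrix.transpose_apply]
  exact Finset.sum_comm

lemma trace_quadratic_loss_eq (A S : Matrix m n ℝ) :
    (Aᵀ * A - Sᵀ * A - Aᵀ * S).trace = ‖A - S‖ ^ 2 - ‖S‖ ^ 2 := by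
  simp only [Matrix.trace_sub, trace_transpose_mul_eq_sum, frobenius_norm_sq_eq_sum,
    Matrix.sub_apply, ← Finset.sum_sub_distrib]
  exact Finset.sum_congr rfl fun i _ => Finset.sum_congr rfl fun j _ => by ring

lemma sum_norm_sub_smul_sum_sq {ι : Type*} (s : Finset ι) (f : ι → Matrix m n ℝ) (ε : ℝ) :
    ∑ i ∈ s, (‖f i - ε • ∑ j ∈ s, f j‖ ^ 2 - ‖f i‖ ^ 2)
      = (#s * ε ^ 2 - 2 * ε) * ‖∑ j ∈ s, f j‖ ^ 2 := by
  simp only [frobenius_norm_sq_eq_sum, ← Finset.sum_sub_distrib, Matrix.sub_apply,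
    Matrix.smul_apply, Matrix.sum_apply, smul_eq_mul]
  rw [Finset.mul_sum, Finset.sum_comm]
  refine Finset.sum_congr rfl fun a _ => ?_
  rw [Finset.mul_sum, Finset.sum_comm]
  refine Finset.sum_congr rfl fun b _ => ?_
  have h : ∀ i ∈ s, (f i a b - ε * ∑ j ∈ s, f j a b) ^ 2 - f i a b ^ 2
      = ε ^ 2 * (∑ j ∈ s, f j a b) ^ 2 - 2 * ε * (∑ j ∈ s, f j a b) * f i a b :=
    fun i _ => by ring
  rw [Finset.sum_congr rfl h, Finset.sum_sub_distrib, Finset.sum_const, ← Finset.mul_sum,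
    nsmul_eq_mul]
  ring

lemma sum_offDiag_abs_le [DecidableEq n] (M : Matrix n n ℝ) :
    ∑ u, ∑ v, (if u ≠ v then |M u v| else 0)
      ≤ Real.sqrt ((Fintype.card n : ℝ) * (Fintype.card n - 1)) * ‖M‖ := by
  have hcard : ∑ q : n × n, (if q.1 ≠ q.2 then (1 : ℝ) else 0)
      = (Fintype.card n : ℝ) * (Fintype.card n - 1) := by
    have hoff : univ.filter (fun q : n × n => q.1 ≠ q.2) = (univ : Finset n).offDiag := by
      ext; simp
    rw [Finset.sum_boole, hoff, Finset.offDiag_card, Nat.cast_sub (Nat.le_mul_self _), card_univ]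
    push_cast
    ring
  calc ∑ u, ∑ v, (if u ≠ v then |M u v| else 0)
      = ∑ q : n × n, Real.sqrt (if q.1 ≠ q.2 then 1 else 0) * Real.sqrt (M q.1 q.2 ^ 2) := by
        rw [Fintype.sum_prod_type]
        refine Finset.sum_congr rfl fun u _ => Finset.sum_congr rfl fun v _ => ?_
        split_ifs <;> simp [Real.sqrt_sq_eq_abs]
    _ ≤ Real.sqrt (∑ q : n × n, if q.1 ≠ q.2 then 1 else 0)
          * Real.sqrt (∑ q : n × n, M q.1 q.2 ^ 2) :=
        Real.sum_sqrt_mul_sqrt_le _ (fun q => by positivity) fun q => sq_nonneg _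
    _ = _ := by
        rw [hcard, ← Real.sqrt_sq (norm_nonneg M), frobenius_norm_sq_eq_sum,
          Fintype.sum_prod_type]

end Frobenius

theorem Matrix.PosDef.eventually_sub_smul {n : Type*} [Fintype n] {A M : Matrix n n ℝ}
    (hA : A.PosDef) (hM : M.IsHermitian) : ∀ᶠ ε in 𝓝 (0 : ℝ), (A - ε • M).PosDef := by
  have hsphere : ∀ᶠ ε in 𝓝 (0 : ℝ), ∀ x ∈ Metric.sphere (0 : n → ℝ) 1,
      0 < x ⬝ᵥ (A - ε • M) *ᵥ x := by
    refine (isCompact_sphere 0 1).eventually_forall_of_forall_eventually fun x hx => ?_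
    have hcont : Continuous fun q : ℝ × (n → ℝ) => q.2 ⬝ᵥ (A - q.1 • M) *ᵥ q.2 := by fun_prop
    have hpos : 0 < x ⬝ᵥ (A - (0 : ℝ) • M) *ᵥ x := by
      simpa using hA.dotProduct_mulVec_pos (ne_zero_of_mem_sphere one_ne_zero ⟨x, hx⟩)
    exact continuousAt_const.eventually_lt hcont.continuousAt hpos
  filter_upwards [hsphere] with ε hε
  refine .of_dotProduct_mulVec_pos (hA.isHermitian.sub (hM.smul (IsSelfAdjoint.all ε)))
    fun x hx => ?_
  -- the quadratic form is homogeneous, so it suffices to test on the unit sphere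
  have hx' : ‖x‖⁻¹ • x ∈ Metric.sphere (0 : n → ℝ) 1 := by
    simp [norm_smul, norm_ne_zero_iff.mpr hx]
  have h := hε _ hx'
  rw [Matrix.mulVec_smul, dotProduct_smul, smul_dotProduct, smul_eq_mul, smul_eq_mul,
    ← mul_assoc] at h
  simpa using pos_of_mul_pos_right h (by positivity)

section Penalties

variable {p : ℕ} (T : ℕ)

noncomputable def lassoPenalty (ξ1 : Fin p → Fin p → ℕ → ℝ) (Θ : ℕ → Matrix (Fin p) (Fin p) ℝ) :
    ℝ :=
  ∑ t ∈ Icc 1 T, ∑ u, ∑ v, if u ≠ v then ξ1 u v t * |Θ t u v| else 0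

noncomputable def fusedPenalty (ξ2 : ℕ → ℝ) (Θ : ℕ → Matrix (Fin p) (Fin p) ℝ) : ℝ :=
  ∑ t ∈ Icc 2 T, ξ2 t * ‖Θ t - Θ (t - 1)‖

lemma gflslA_eq (X : ℕ → Fin p → ℝ) (lam1 lam2 : ℝ) (ξ1 : Fin p → Fin p → ℕ → ℝ)
    (ξ2 : ℕ → ℝ) (Θ : ℕ → Matrix (Fin p) (Fin p) ℝ) :
    gflslA p T X lam1 lam2 ξ1 ξ2 Θ
      = 1 / (2 * T) * ∑ t ∈ Icc 1 T,
          (‖Θ t - vecMulVec (X t) (X t)‖ ^ 2 - ‖vecMulVec (X t) (X t)‖ ^ 2)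
        + lam1 * lassoPenalty T ξ1 Θ + lam2 * fusedPenalty T ξ2 Θ := by
  simp only [gflslA, lassoPenalty, fusedPenalty, trace_quadratic_loss_eq, frob_eq_norm]

lemma lassoPenalty_sub_smul_le {ξ1 : Fin p → Fin p → ℕ → ℝ}
    (hξ1 : ∀ u v : Fin p, u ≠ v → ∀ t ∈ Icc 1 T, 0 ≤ ξ1 u v t)
    (Θ D : ℕ → Matrix (Fin p) (Fin p) ℝ) {ε : ℝ} (hε : 0 ≤ ε) :
    lassoPenalty T ξ1 (Θ - ε • D) ≤ lassoPenalty T ξ1 Θ + ε * lassoPenalty T ξ1 D := by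
  simp only [lassoPenalty, Finset.mul_sum, ← Finset.sum_add_distrib]
  refine Finset.sum_le_sum fun t ht => Finset.sum_le_sum fun u _ => Finset.sum_le_sum fun v _ => ?_
  split_ifs with huv
  · have h : |(Θ - ε • D) t u v| ≤ |Θ t u v| + ε * |D t u v| := by
      simpa [abs_mul, abs_of_nonneg hε] using abs_sub (Θ t u v) (ε * D t u v)
    nlinarith [hξ1 u v huv t ht]
  · simp

lemma fusedPenalty_sub_smul_le {ξ2 : ℕ → ℝ} (hξ2 : ∀ t ∈ Icc 2 T, 0 ≤ ξ2 t)
    (Θ D : ℕ → Matrix (Fin p) (Fin p) ℝ) {ε : ℝ} (hε : 0 ≤ ε) :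
    fusedPenalty T ξ2 (Θ - ε • D) ≤ fusedPenalty T ξ2 Θ + ε * fusedPenalty T ξ2 D := by
  simp only [fusedPenalty, Finset.mul_sum, ← Finset.sum_add_distrib]
  refine Finset.sum_le_sum fun t ht => ?_
  have h : ‖(Θ - ε • D) t - (Θ - ε • D) (t - 1)‖
      ≤ ‖Θ t - Θ (t - 1)‖ + ε * ‖D t - D (t - 1)‖ := by
    have e : (Θ - ε • D) t - (Θ - ε • D) (t - 1) = (Θ t - Θ (t - 1)) - ε • (D t - D (t - 1)) := by
      simp only [Pi.sub_apply, Pi.smul_apply, smul_sub]; abel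
    rw [e, ← norm_smul_of_nonneg hε]
    exact norm_sub_le _ _
  nlinarith [hξ2 t ht]

end Penalties

lemma nonneg_of_mem_Icc_of_endpoints_eq_zero {T : ℕ} {ξ2 : ℕ → ℝ}
    (hξ2 : ∀ t ∈ Icc 2 T, 0 ≤ ξ2 t) (h1 : ξ2 1 = 0) (hT1 : ξ2 (T + 1) = 0) {r : ℕ}
    (hr : r ∈ Icc 1 (T + 1)) : 0 ≤ ξ2 r := by
  rw [mem_Icc] at hr
  rcases (show r = 1 ∨ r = T + 1 ∨ r ∈ Icc 2 T by rw [mem_Icc]; omega) with rfl | rfl | h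
  exacts [h1.ge, hT1.ge, hξ2 r h]

section BlockDirection

variable {p : ℕ} (s t : ℕ) (M : Matrix (Fin p) (Fin p) ℝ)

noncomputable def blockDirection (r : ℕ) : Matrix (Fin p) (Fin p) ℝ :=
  if r ∈ Icc s (t - 1) then M else 0

lemma lassoPenalty_blockDirection_le (T : ℕ) {ξ1 : Fin p → Fin p → ℕ → ℝ} {Ξ : ℝ}
    (hΞ : ∀ r ∈ Icc s (t - 1), ∀ u v : Fin p, u ≠ v → ξ1 u v r ≤ Ξ) (hΞ0 : 0 ≤ Ξ) :
    lassoPenalty T ξ1 (blockDirection s t M)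
      ≤ #(Icc s (t - 1)) * (Ξ * (Real.sqrt (p * (p - 1)) * ‖M‖)) := by
  have hterm : ∀ r ∈ Icc 1 T,
      ∑ u, ∑ v, (if u ≠ v then ξ1 u v r * |blockDirection s t M r u v| else 0)
        ≤ if r ∈ Icc s (t - 1) then Ξ * (Real.sqrt (p * (p - 1)) * ‖M‖) else 0 := by
    intro r _
    unfold blockDirection
    split_ifs with hr
    · calc ∑ u, ∑ v, (if u ≠ v then ξ1 u v r * |M u v| else 0)
          ≤ ∑ u, ∑ v, Ξ * (if u ≠ v then |M u v| else 0) := by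
            gcongr with u _ v _
            split_ifs with huv
            · exact mul_le_mul_of_nonneg_right (hΞ r hr u v huv) (abs_nonneg _)
            · simp
        _ ≤ Ξ * (Real.sqrt (p * (p - 1)) * ‖M‖) := by
            simp only [← Finset.mul_sum]
            simpa using mul_le_mul_of_nonneg_left (sum_offDiag_abs_le M) hΞ0
    · simp
  calc lassoPenalty T ξ1 (blockDirection s t M)
      ≤ ∑ r ∈ Icc 1 T, if r ∈ Icc s (t - 1) then Ξ * (Real.sqrt (p * (p - 1)) * ‖M‖) else 0 :=
        sum_le_sum hterm
    _ = #(Icc 1 T ∩ Icc s (t - 1)) * (Ξ * (Real.sqrt (p * (p - 1)) * ‖M‖)) := by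
        rw [sum_ite_mem, sum_const, nsmul_eq_mul]
    _ ≤ #(Icc s (t - 1)) * (Ξ * (Real.sqrt (p * (p - 1)) * ‖M‖)) := by
        gcongr
        exact inter_subset_right

lemma fusedPenalty_blockDirection_le (T : ℕ) {ξ2 : ℕ → ℝ} (hst : s < t)
    (hξ2s : 0 ≤ ξ2 s) (hξ2t : 0 ≤ ξ2 t) :
    fusedPenalty T ξ2 (blockDirection s t M) ≤ (ξ2 s + ξ2 t) * ‖M‖ := by
  have hterm : ∀ r ∈ Icc 2 T,
      ξ2 r * ‖blockDirection s t M r - blockDirection s t M (r - 1)‖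
        = (if r = s then ξ2 s * ‖M‖ else 0) + (if r = t then ξ2 t * ‖M‖ else 0) := by
    intro r hr
    rw [mem_Icc] at hr
    simp only [blockDirection, mem_Icc]
    split_ifs <;> first | omega | simp_all
  rw [fusedPenalty, sum_congr rfl hterm, sum_add_distrib, sum_ite_eq', sum_ite_eq', add_mul]
  have hs : (if s ∈ Icc 2 T then ξ2 s * ‖M‖ else 0) ≤ ξ2 s * ‖M‖ := by
    split_ifs
    exacts [le_rfl, mul_nonneg hξ2s (norm_nonneg M)]
  have ht : (if t ∈ Icc 2 T then ξ2 t * ‖M‖ else 0) ≤ ξ2 t * ‖M‖ := by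
    split_ifs
    exacts [le_rfl, mul_nonneg hξ2t (norm_nonneg M)]
  exact add_le_add hs ht

lemma sum_loss_sub_smul_blockDirection (T : ℕ) (Θ S : ℕ → Matrix (Fin p) (Fin p) ℝ)
    (hIT : Icc s (t - 1) ⊆ Icc 1 T) (ε : ℝ) :
    ∑ r ∈ Icc 1 T, (‖(Θ - ε • blockDirection s t (∑ r ∈ Icc s (t - 1), (Θ r - S r))) r - S r‖ ^ 2
        - ‖S r‖ ^ 2)
      = ∑ r ∈ Icc 1 T, (‖Θ r - S r‖ ^ 2 - ‖S r‖ ^ 2)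
        + (#(Icc s (t - 1)) * ε ^ 2 - 2 * ε) * ‖∑ r ∈ Icc s (t - 1), (Θ r - S r)‖ ^ 2 := by
  rw [← sum_norm_sub_smul_sum_sq, ← sub_eq_iff_eq_add', ← sum_sub_distrib]
  refine (sum_subset hIT fun r _ hr => ?_).symm.trans (sum_congr rfl fun r hr => ?_)
  · simp [blockDirection, hr]
  · simp only [blockDirection, hr, if_true, Pi.sub_apply, Pi.smul_apply]
    rw [sub_right_comm (Θ r)]
    ring

lemma Nat.cast_card_Icc_sub_one {s t : ℕ} (hst : s < t) : (#(Icc s (t - 1)) : ℝ) = t - s := by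
  rw [Nat.card_Icc, Nat.sub_add_cancel (by omega : 1 ≤ t), Nat.cast_sub hst.le]

lemma gflslA_sub_smul_blockDirection_le {p T : ℕ} (X : ℕ → Fin p → ℝ) {lam1 lam2 : ℝ}
    (hlam1 : 0 ≤ lam1) (hlam2 : 0 ≤ lam2) {ξ1 : Fin p → Fin p → ℕ → ℝ}
    (hξ1 : ∀ u v : Fin p, u ≠ v → ∀ t ∈ Icc 1 T, 0 ≤ ξ1 u v t)
    {ξ2 : ℕ → ℝ} (hξ2 : ∀ t ∈ Icc 2 T, 0 ≤ ξ2 t) (Θ : ℕ → Matrix (Fin p) (Fin p) ℝ)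
    {s t : ℕ} (hst : s < t) (hIT : Icc s (t - 1) ⊆ Icc 1 T) {M : Matrix (Fin p) (Fin p) ℝ}
    (hM : ∑ r ∈ Icc s (t - 1), (Θ r - vecMulVec (X r) (X r)) = M) {Ξ : ℝ}
    (hΞ : ∀ r ∈ Icc s (t - 1), ∀ u v : Fin p, u ≠ v → ξ1 u v r ≤ Ξ) (hΞ0 : 0 ≤ Ξ)
    (hξ2s : 0 ≤ ξ2 s) (hξ2t : 0 ≤ ξ2 t) {ε : ℝ} (hε : 0 ≤ ε) :
    gflslA p T X lam1 lam2 ξ1 ξ2 (Θ - ε • blockDirection s t M)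
      ≤ gflslA p T X lam1 lam2 ξ1 ξ2 Θ
        + ε * (ε * ((t - s) * ‖M‖ ^ 2 / (2 * T))
          + ‖M‖ * (lam2 * (ξ2 s + ξ2 t) + lam1 * Real.sqrt (p * (p - 1)) * (t - s) * Ξ)
          - ‖M‖ ^ 2 / T) := by
  have hlasso := mul_le_mul_of_nonneg_left ((lassoPenalty_sub_smul_le T hξ1 Θ _ hε).trans
    (add_le_add_right (mul_le_mul_of_nonneg_left
      (lassoPenalty_blockDirection_le s t M T hΞ hΞ0) hε) _)) hlam1
  have hfused := mul_le_mul_of_nonneg_left ((fusedPenalty_sub_smul_le T hξ2 Θ _ hε).trans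
    (add_le_add_right (mul_le_mul_of_nonneg_left
      (fusedPenalty_blockDirection_le s t M T hst hξ2s hξ2t) hε) _)) hlam2
  rw [gflslA_eq, gflslA_eq, ← hM,
    sum_loss_sub_smul_blockDirection s t T Θ (fun r => vecMulVec (X r) (X r)) hIT ε, hM]
  rw [Nat.cast_card_Icc_sub_one hst] at hlasso ⊢
  linear_combination hlasso + hfused

lemma eventually_posDef_sub_smul_blockDirection {p T : ℕ} {Θ : ℕ → Matrix (Fin p) (Fin p) ℝ}
    (hΘ : ∀ r ∈ Icc 1 T, (Θ r).PosDef) (s t : ℕ) {M : Matrix (Fin p) (Fin p) ℝ}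
    (hM : M.IsHermitian) :
    ∀ᶠ ε in 𝓝 (0 : ℝ), ∀ r ∈ Icc 1 T, (Θ r - ε • blockDirection s t M r).PosDef :=
  (eventually_all_finset _).2 fun r hr => (hΘ r hr).eventually_sub_smul <| by
    unfold blockDirection
    split_ifs
    exacts [hM, isHermitian_zero]

theorem stmt7_general (p T : ℕ)
    (X : ℕ → Fin p → ℝ) (lam1 lam2 : ℝ) (hlam1 : 0 ≤ lam1) (hlam2 : 0 < lam2)
    (ξ1 : Fin p → Fin p → ℕ → ℝ)
    (hξ1 : ∀ u v : Fin p, u ≠ v → ∀ t ∈ Finset.Icc 1 T, 0 ≤ ξ1 u v t)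
    (ξ2 : ℕ → ℝ) (hξ2 : ∀ t ∈ Finset.Icc 2 T, 0 ≤ ξ2 t) (hξ21 : ξ2 1 = 0)
    (hξ2T1 : ξ2 (T + 1) = 0)
    (Θhat : ℕ → Matrix (Fin p) (Fin p) ℝ)
    (hPD : ∀ t ∈ Finset.Icc 1 T, (Θhat t).PosDef)
    (hmin : ∀ Θ : ℕ → Matrix (Fin p) (Fin p) ℝ,
      (∀ t ∈ Finset.Icc 1 T, (Θ t).PosDef) →
      gflslA p T X lam1 lam2 ξ1 ξ2 Θhat ≤ gflslA p T X lam1 lam2 ξ1 ξ2 Θ) :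
    ∀ s t : ℕ, 1 ≤ s → s < t → t ≤ T + 1 →
      frob ((1 / (T : ℝ)) • ∑ r ∈ Finset.Icc s (t - 1),
          (Θhat r - Matrix.vecMulVec (X r) (X r)))
        ≤ lam2 * (ξ2 s + ξ2 t)
          + lam1 * Real.sqrt ((p : ℝ) * ((p : ℝ) - 1)) * ((t : ℝ) - (s : ℝ)) *
            (⨆ r ∈ Finset.Icc s (t - 1), ⨆ u : Fin p, ⨆ v : Fin p,
              ⨆ _ : u ≠ v, ξ1 u v r) := by
  intro s t hs hst htT
  set M := ∑ r ∈ Icc s (t - 1), (Θhat r - vecMulVec (X r) (X r)) with hM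
  set B := lam2 * (ξ2 s + ξ2 t) + lam1 * Real.sqrt (p * (p - 1)) * (t - s)
    * ⨆ r ∈ Icc s (t - 1), ⨆ u : Fin p, ⨆ v : Fin p, ⨆ _ : u ≠ v, ξ1 u v r
  have hIT : Icc s (t - 1) ⊆ Icc 1 T := fun r hr => by simp only [mem_Icc] at hr ⊢; omega
  have hΞ0 := biSup_offDiag_nonneg fun r hr u v huv => hξ1 u v huv r (hIT hr)
  have hξ2s := nonneg_of_mem_Icc_of_endpoints_eq_zero hξ2 hξ21 hξ2T1 (mem_Icc.2 ⟨hs, by omega⟩)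
  have hξ2t := nonneg_of_mem_Icc_of_endpoints_eq_zero hξ2 hξ21 hξ2T1 (mem_Icc.2 ⟨by omega, htT⟩)
  have hMherm : M.IsHermitian := isSelfAdjoint_sum _ fun r hr => (hPD r (hIT hr)).isHermitian.sub
    (by simpa using (posSemidef_vecMulVec_self_star (X r)).isHermitian)
  have hfirst : ∀ᶠ ε in 𝓝[>] (0 : ℝ),
      ‖M‖ ^ 2 / T ≤ ε * ((t - s) * ‖M‖ ^ 2 / (2 * T)) + ‖M‖ * B := by
    filter_upwards [nhdsWithin_le_nhds (eventually_posDef_sub_smul_blockDirection hPD s t hMherm),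
      self_mem_nhdsWithin] with ε hεPD hε
    have h := (hmin _ hεPD).trans (gflslA_sub_smul_blockDirection_le X hlam1 hlam2.le hξ1 hξ2 Θhat
      hst hIT hM.symm (fun r hr u v huv => le_biSup_offDiag ξ1 hr huv) hΞ0 hξ2s hξ2t hε.out.le)
    exact sub_nonneg.1 ((mul_nonneg_iff_of_pos_left hε.out).1 (by linarith))
  rw [frob_eq_norm, norm_smul, Real.norm_of_nonneg (by positivity)]
  refine one_div_mul_le_of_sq_div_le_mul (norm_nonneg M) ?_ (le_of_eventually_le_mul_add hfirst)
  have hts : (0 : ℝ) ≤ t - s := sub_nonneg.2 (by exact_mod_cast hst.le)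
  positivity

/-- for any minimizer of the adaptive GFlsL objective over positive definite
tuples, the normalized partial residual sums obey the stated bound. -/
theorem stmt7 (p T : ℕ) (hp : 1 ≤ p) (hT : 1 ≤ T)
    (X : ℕ → Fin p → ℝ) (lam1 lam2 : ℝ) (hlam1 : 0 ≤ lam1) (hlam2 : 0 < lam2)
    (ξ1 : Fin p → Fin p → ℕ → ℝ)
    (hξ1 : ∀ u v : Fin p, u ≠ v → ∀ t ∈ Finset.Icc 1 T, 0 ≤ ξ1 u v t)
    (ξ2 : ℕ → ℝ) (hξ2 : ∀ t ∈ Finset.Icc 2 T, 0 ≤ ξ2 t) (hξ21 : ξ2 1 = 0)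
    (hξ2T1 : ξ2 (T + 1) = 0)
    (Θhat : ℕ → Matrix (Fin p) (Fin p) ℝ)
    (hPD : ∀ t ∈ Finset.Icc 1 T, (Θhat t).PosDef)
    (hmin : ∀ Θ : ℕ → Matrix (Fin p) (Fin p) ℝ,
      (∀ t ∈ Finset.Icc 1 T, (Θ t).PosDef) →
      gflslA p T X lam1 lam2 ξ1 ξ2 Θhat ≤ gflslA p T X lam1 lam2 ξ1 ξ2 Θ) :
    ∀ s t : ℕ, 1 ≤ s → s < t → t ≤ T + 1 →
      frob ((1 / (T : ℝ)) • ∑ r ∈ Finset.Icc s (t - 1),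
          (Θhat r - Matrix.vecMulVec (X r) (X r)))
        ≤ lam2 * (ξ2 s + ξ2 t)
          + lam1 * Real.sqrt ((p : ℝ) * ((p : ℝ) - 1)) * ((t : ℝ) - (s : ℝ)) *
            (⨆ r ∈ Finset.Icc s (t - 1), ⨆ u : Fin p, ⨆ v : Fin p,
              ⨆ _ : u ≠ v, ξ1 u v r) :=
  stmt7_general p T X lam1 lam2 hlam1 hlam2 ξ1 hξ1 ξ2 hξ2 hξ21 hξ2T1 Θhat hPD hmin
end BlockDirection
end
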